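/- arXiv:1906.04842 — 3 statements merged into one kernel-verified Lean document; each statement's English description precedes it below -/
import Mathlib

section
/- If |x ∩ y|/t ≤ (1−ε)λ for ε ∈ (0,1), then the expected number of nodes at depth k in the Chosen Path Tree containing both x and y is at most (1−ε)^k ≤ e^{−εk}. -/
/-- If `|x ∩ y|/t ≤ (1-ε)λ` then the expected number of depth-`k` nodes of the
Chosen Path Tree containing both `x` and `y`, namely `((|x∩y|/t)/λ)^k`, is at most
`(1-ε)^k ≤ exp (-ε k)`. -/
theorem stmt1 (lam ε : ℝ) (t s : ℕ) (hlam : 0 < lam) (ht : 0 < t)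
    (hε : ε ∈ Set.Ioo (0 : ℝ) 1) (hsim : (s : ℝ) / t ≤ (1 - ε) * lam) (k : ℕ) :
    ((s : ℝ) / t / lam) ^ k ≤ (1 - ε) ^ k ∧ (1 - ε) ^ k ≤ Real.exp (-ε * k) := by
  obtain ⟨hε0, hε1⟩ := hε
  constructor
  · apply pow_le_pow_left₀
    · positivity
    · rw [div_le_iff₀ hlam]
      exact hsim
  · calc (1 - ε) ^ k ≤ Real.exp (-ε) ^ k := by
          apply pow_le_pow_left₀ (by linarith)
          linarith [Real.add_one_le_exp (-ε)]
      _ = Real.exp (-ε * k) := by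
          rw [← Real.exp_nat_mul]; ring_nf
end

section
/- (Agresti-type bound) Consider a Galton–Watson branching process whose offspring distribution is Binomial(s, 1/(λt)) with mean μ = s/(λt) ≥ 1. Then for every k > 0, the probability that the process survives to generation k is at least 1/(k+1). -/
/-!
Write `x = 1 - q` for an extinction probability. For the Binomial(s, p) generating function,
`f (1 - q) = (1 - p q)^s ≤ exp (-s p q) ≤ exp (-q) ≤ 1 / (1 + q)` as soon as `s p ≥ 1`,
i.e. `f x ≤ 1 / (2 - x)` on `[0, 1]`. The map `x ↦ 1 / (2 - x)` sends `n / (n + 1)` to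
`(n + 1) / (n + 2)`, so by induction the extinction probability `f^[n] 0` is at most
`n / (n + 1)`.
-/

open Set

theorem iterate_zero_mem_Icc_div_succ (g : ℝ → ℝ)
    (hg : ∀ x ∈ Icc (0 : ℝ) 1, 0 ≤ g x ∧ g x ≤ 1 / (2 - x)) (n : ℕ) :
    g^[n] 0 ∈ Icc (0 : ℝ) (n / (n + 1)) := by
  induction n with
  | zero => simp
  | succ n ih =>
    have hn : (n : ℝ) / (n + 1) ≤ 1 := div_le_one_of_le₀ (by linarith) (by positivity)
    obtain ⟨hg0, hg1⟩ := hg _ ⟨ih.1, ih.2.trans hn⟩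
    rw [Function.iterate_succ_apply']
    refine ⟨hg0, hg1.trans ?_⟩
    calc 1 / (2 - g^[n] 0) ≤ 1 / (2 - n / (n + 1)) :=
          one_div_le_one_div_of_le (by linarith) (by linarith [ih.2])
      _ = ((n + 1 : ℕ) : ℝ) / ((n + 1 : ℕ) + 1) := by
          push_cast
          rw [div_eq_div_iff (by linarith) (by positivity)]
          field_simp
          ring

theorem binomial_pgf_le_one_div_two_sub {s : ℕ} {p : ℝ} (hp0 : 0 ≤ p) (hp1 : p ≤ 1)
    (hmean : 1 ≤ (s : ℝ) * p) {x : ℝ} (hx : x ∈ Icc (0 : ℝ) 1) :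
    (1 - p + p * x) ^ s ≤ 1 / (2 - x) := by
  set q := 1 - x
  have hq0 : 0 ≤ q := by linarith [hx.2]
  have hbase : 1 - p + p * x = 1 - p * q := by ring
  rw [hbase, show 2 - x = 1 + q by ring]
  calc (1 - p * q) ^ s ≤ Real.exp (-(p * q)) ^ s :=
        pow_le_pow_left₀ (by nlinarith [hx.1]) (Real.one_sub_le_exp_neg _) s
    _ = Real.exp (-((s * p) * q)) := by rw [← Real.exp_nat_mul]; ring_nf
    _ ≤ Real.exp (-q) := Real.exp_le_exp.2 (by nlinarith)
    _ = (Real.exp q)⁻¹ := Real.exp_neg q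
    _ ≤ 1 / (1 + q) := by
        rw [one_div]
        exact inv_anti₀ (by positivity) (by linarith [Real.add_one_le_exp q])

-- `f` is the offspring generating function, so `f^[k] 0` is the probability of extinction by
-- generation `k`.
theorem stmt3_general (s : ℕ) (p : ℝ)
    (hp0 : 0 < p) (hp1 : p ≤ 1) (hmean : 1 ≤ (s : ℝ) * p)
    (f : ℝ → ℝ) (hf : ∀ x, f x = (1 - p + p * x) ^ s) (k : ℕ) :
    1 / ((k : ℝ) + 1) ≤ 1 - f^[k] 0 := by
  have hextinct := iterate_zero_mem_Icc_div_succ f (fun x hx => by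
    rw [hf]
    exact ⟨pow_nonneg (by nlinarith [hx.1, hx.2]) s,
      binomial_pgf_le_one_div_two_sub hp0.le hp1 hmean hx⟩) k
  have hsplit : 1 / ((k : ℝ) + 1) = 1 - k / (k + 1) := by field_simp; ring
  linarith [hextinct.2]

/-- Agresti-type bound: for a Galton–Watson process with `Binomial(s, p)` offspring,
`p = 1/(λ t)`, and mean `s p ≥ 1`, the survival probability to generation `k`,
expressed via the iterated probability generating function `f x = (1 - p + p x)^s`
as `1 - f^[k] 0`, is at least `1/(k+1)`. -/
theorem stmt3 (s t : ℕ) (lam p : ℝ) (hlam : lam ∈ Set.Ioo (0 : ℝ) 1)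
    (hp : p = 1 / (lam * t)) (hp0 : 0 < p) (hp1 : p ≤ 1) (hmean : 1 ≤ (s : ℝ) * p)
    (f : ℝ → ℝ) (hf : ∀ x, f x = (1 - p + p * x) ^ s) (k : ℕ) (hk : 0 < k) :
    1 / ((k : ℝ) + 1) ≤ 1 - f^[k] 0 :=
  stmt3_general s p hp0 hp1 hmean f hf k
end

section
/- Monotonicity of survival in the offspring mean: if two Galton–Watson processes have Binomial(s, p) and Binomial(s, p') offspring with p ≤ p', then the survival probability to any generation k of the first is at most that of the second; hence sim(x,y) ≥ λ implies the Chosen Path collision probability at depth k for (x,y) is at least that of the critical process with mean exactly 1. -/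
lemma aux17 (s : ℕ) (p p' : ℝ) (hp0 : 0 ≤ p) (hp'1 : p' ≤ 1) (hle : p ≤ p') :
    ∀ k : ℕ, (fun x : ℝ => (1 - p' + p' * x) ^ s)^[k] 0 ≤ (fun x : ℝ => (1 - p + p * x) ^ s)^[k] 0
      ∧ 0 ≤ (fun x : ℝ => (1 - p' + p' * x) ^ s)^[k] 0
      ∧ (fun x : ℝ => (1 - p + p * x) ^ s)^[k] 0 ≤ 1 := by
  have hp'0 : 0 ≤ p' := hp0.trans hle
  intro k
  induction k with
  | zero => simp
  | succ k ih =>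
    obtain ⟨hab, ha0, hb1⟩ := ih
    set a := (fun x : ℝ => (1 - p' + p' * x) ^ s)^[k] 0 with ha
    set b := (fun x : ℝ => (1 - p + p * x) ^ s)^[k] 0 with hb
    rw [Function.iterate_succ_apply', Function.iterate_succ_apply', ← ha, ← hb]
    have h1 : 0 ≤ 1 - p' + p' * a := by nlinarith
    have h2 : 1 - p' + p' * a ≤ 1 - p + p * b := by nlinarith
    have h3 : 1 - p + p * b ≤ 1 := by nlinarith
    refine ⟨pow_le_pow_left₀ h1 h2 s, pow_nonneg h1 s, ?_⟩
    exact pow_le_one₀ (by linarith) h3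

/-- Monotonicity of survival in the offspring mean: for Galton–Watson processes with
`Binomial(s, p)` and `Binomial(s, p')` offspring, `p ≤ p'`, the survival probability to
generation `k` (via iterated pgfs) of the first is at most that of the second; hence a
process with mean `s p ≥ 1` survives at least as well as the critical `Binomial(s, 1/s)`. -/
theorem stmt17 (s : ℕ) (p p' : ℝ) (hp : p ∈ Set.Icc (0 : ℝ) 1)
    (hp' : p' ∈ Set.Icc (0 : ℝ) 1) (hle : p ≤ p') (f g : ℝ → ℝ)
    (hf : ∀ x, f x = (1 - p + p * x) ^ s) (hg : ∀ x, g x = (1 - p' + p' * x) ^ s) :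
    (∀ k : ℕ, 1 - f^[k] 0 ≤ 1 - g^[k] 0) ∧
    (1 ≤ s → 1 / (s : ℝ) ≤ p →
      ∀ k : ℕ, 1 - (fun y : ℝ => (1 - 1 / s + y / s) ^ s)^[k] 0 ≤ 1 - f^[k] 0) := by
  have hfe : f = fun x : ℝ => (1 - p + p * x) ^ s := funext hf
  have hge : g = fun x : ℝ => (1 - p' + p' * x) ^ s := funext hg
  constructor
  · intro k
    have := (aux17 s p p' hp.1 hp'.2 hle k).1
    rw [hfe, hge]
    linarith
  · intro hs hsp
    have hs' : (1 : ℝ) ≤ s := by exact_mod_cast hs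
    have hq0 : (0 : ℝ) ≤ 1 / s := by positivity
    have heq : (fun y : ℝ => (1 - 1 / s + y / s) ^ s) =
        fun x : ℝ => (1 - 1 / (s : ℝ) + (1 / s) * x) ^ s := by
      funext x; ring_nf
    intro k
    have := (aux17 s (1 / s) p hq0 hp.2 hsp k).1
    rw [hfe, heq]
    linarith
end
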